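/- Let δ ∈ (0,1), M ∈ ℕ and t ∈ [δ,1]. Then 2·Σ_{k=M+1}^∞ 1/([k/2]_t)² + (2/(M+1)²)·Σ_{k=1}^{M} k²/([k/2]_t)² ≤ ε(δ,M)², where ε(δ,M) := √2·(δ^{1/2}+δ^{−1/2})·( M/(M+1)² + Σ_{k=M+1}^∞ 1/k² )^{1/2}. -/
import Mathlib


/-- The `q`-number `[a]_t = (t^a - t^{-a})/(t - t⁻¹)` for `t ≠ 1`, and `a` for `t = 1`. -/
noncomputable def qNum (t a : ℝ) : ℝ :=
  if t = 1 then a else (t ^ a - t ^ (-a)) / (t - t⁻¹)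

/-- The quantity `ε(δ,M) = √2·(δ^{1/2}+δ^{−1/2})·(M/(M+1)² + Σ_{k=M+1}^∞ 1/k²)^{1/2}`. -/
noncomputable def epsDM (δ : ℝ) (M : ℕ) : ℝ :=
  Real.sqrt 2 * (δ ^ ((1 : ℝ) / 2) + δ ^ (-(1 : ℝ) / 2)) *
    Real.sqrt ((M : ℝ) / ((M : ℝ) + 1) ^ 2 + ∑' k : ℕ, 1 / ((k : ℝ) + (M : ℝ) + 1) ^ 2)

lemma aux_step (u x k : ℝ) (hu0 : 0 < u) (hu1 : u ≤ 1) (hx0 : 0 ≤ x) (hx1 : x ≤ 1)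
    (hxu : x * u ≤ 1) (hk : 0 ≤ k)
    (ih : k * x * (1 - u ^ 2) ≤ u * (1 - x ^ 2)) :
    (k + 1) * (x * u) * (1 - u ^ 2) ≤ u * (1 - (x * u) ^ 2) := by
  nlinarith [mul_le_mul_of_nonneg_left ih hu0.le,
    mul_nonneg (mul_nonneg (mul_nonneg hu0.le (sub_nonneg.2 hu1)) (sub_nonneg.2 hx1))
      (sub_nonneg.2 hxu)]

lemma aux1 (u : ℝ) (hu0 : 0 < u) (hu1 : u ≤ 1) (k : ℕ) :
    (k : ℝ) * u ^ k * (1 - u ^ 2) ≤ u * (1 - (u ^ k) ^ 2) := by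
  induction k with
  | zero => simp
  | succ n ih =>
      have hxu : u ^ n * u ≤ 1 := by
        rw [← pow_succ]; exact pow_le_one₀ hu0.le hu1
      have h := aux_step u (u ^ n) n hu0 hu1 (pow_nonneg hu0.le n)
        (pow_le_one₀ hu0.le hu1) hxu n.cast_nonneg ih
      push_cast
      rw [pow_succ]
      exact h

set_option maxHeartbeats 800000 in
/-- Key estimate: `k ≤ (δ^{1/2}+δ^{-1/2}) · [k/2]_t` and positivity. -/
lemma key (δ : ℝ) (hδ0 : 0 < δ) (hδ1 : δ < 1) (t : ℝ) (htδ : δ ≤ t) (ht1 : t ≤ 1)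
    (k : ℕ) (hk : 1 ≤ k) :
    0 < qNum t ((k : ℝ) / 2) ∧
      (k : ℝ) ≤ (δ ^ ((1 : ℝ) / 2) + δ ^ (-(1 : ℝ) / 2)) * qNum t ((k : ℝ) / 2) := by
  have ht0 : 0 < t := hδ0.trans_le htδ
  set a := δ ^ ((1 : ℝ) / 2) with ha
  have ha0 : 0 < a := Real.rpow_pos_of_pos hδ0 _
  have ha1 : a < 1 := Real.rpow_lt_one hδ0.le hδ1 (by norm_num)
  have hainv : δ ^ (-(1 : ℝ) / 2) = a⁻¹ := by
    rw [show (-(1 : ℝ) / 2) = -((1 : ℝ) / 2) by ring, Real.rpow_neg hδ0.le]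
  have hk0 : (0 : ℝ) < k := by exact_mod_cast hk
  have hA2 : 2 ≤ a + a⁻¹ := by
    nlinarith [mul_nonneg (inv_nonneg.2 ha0.le) (sq_nonneg (a - 1)),
      mul_inv_cancel₀ ha0.ne']
  rcases eq_or_lt_of_le ht1 with h1 | h1
  · subst h1
    have hq : qNum 1 ((k : ℝ) / 2) = (k : ℝ) / 2 := by simp [qNum]
    rw [hq, hainv]
    constructor
    · positivity
    · nlinarith
  · -- t < 1
    set u := t ^ ((1 : ℝ) / 2) with hu
    have hu0 : 0 < u := Real.rpow_pos_of_pos ht0 _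
    have hu1 : u < 1 := Real.rpow_lt_one ht0.le h1 (by norm_num)
    have htu : u ^ 2 = t := by
      rw [← Real.rpow_natCast u 2, hu, ← Real.rpow_mul ht0.le]; norm_num
    have hpow : t ^ ((k : ℝ) / 2) = u ^ k := by
      rw [show (k : ℝ) / 2 = (1 : ℝ) / 2 * k by ring, Real.rpow_mul ht0.le,
        Real.rpow_natCast]
    set x := u ^ k with hx
    have hx0 : 0 < x := pow_pos hu0 k
    have hx1 : x < 1 := pow_lt_one₀ hu0.le hu1 (by omega)
    have hQ : qNum t ((k : ℝ) / 2) = (x - x⁻¹) / (t - t⁻¹) := by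
      rw [qNum, if_neg h1.ne, Real.rpow_neg ht0.le, hpow]
    have hden : t - t⁻¹ < 0 := by
      have h2 : 1 < t⁻¹ := (one_lt_inv₀ ht0).2 h1
      linarith
    have haux : (k : ℝ) * x * (1 - u ^ 2) ≤ u * (1 - x ^ 2) := aux1 u hu0 hu1.le k
    have hprod : (x - x⁻¹) * ((u + u⁻¹) * (x * (1 - u ^ 2)))
        = u * (1 - x ^ 2) * (t - t⁻¹) := by
      rw [← htu]; field_simp; ring
    have hmul : qNum t ((k : ℝ) / 2) * ((u + u⁻¹) * (x * (1 - u ^ 2)))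
        = u * (1 - x ^ 2) := by
      rw [hQ, div_mul_eq_mul_div, hprod, mul_div_assoc,
        div_self hden.ne, mul_one]
    have hu2 : u ^ 2 < 1 := by nlinarith
    have hpos' : 0 < x * (1 - u ^ 2) := mul_pos hx0 (by linarith)
    have hk_le : (k : ℝ) ≤ qNum t ((k : ℝ) / 2) * (u + u⁻¹) := by
      have h2 : (k : ℝ) * (x * (1 - u ^ 2))
          ≤ (qNum t ((k : ℝ) / 2) * (u + u⁻¹)) * (x * (1 - u ^ 2)) := by
        rw [mul_assoc, hmul]
        linarith [haux]
      exact le_of_mul_le_mul_right h2 hpos'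
    have huinv : 0 < u + u⁻¹ := by positivity
    have hQpos : 0 < qNum t ((k : ℝ) / 2) := by
      by_contra h
      push_neg at h
      nlinarith
    refine ⟨hQpos, ?_⟩
    have hau : a ≤ u := Real.rpow_le_rpow hδ0.le htδ (by norm_num)
    have hmono : u + u⁻¹ ≤ a + a⁻¹ := by
      have hau1 : a * u ≤ 1 := mul_le_one₀ ha1.le hu0.le hu1.le
      have hexp : a + a⁻¹ - (u + u⁻¹) = (u - a) * (1 - a * u) / (a * u) := by
        field_simp; ring
      have : 0 ≤ a + a⁻¹ - (u + u⁻¹) := by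
        rw [hexp]
        apply div_nonneg (mul_nonneg (by linarith) (by linarith)) (by positivity)
      linarith
    rw [hainv]
    calc (k : ℝ) ≤ qNum t ((k : ℝ) / 2) * (u + u⁻¹) := hk_le
      _ ≤ qNum t ((k : ℝ) / 2) * (a + a⁻¹) :=
          mul_le_mul_of_nonneg_left hmono hQpos.le
      _ = (a + a⁻¹) * qNum t ((k : ℝ) / 2) := mul_comm _ _

lemma key2 (δ : ℝ) (hδ0 : 0 < δ) (hδ1 : δ < 1) (t : ℝ) (htδ : δ ≤ t) (ht1 : t ≤ 1)
    (k : ℕ) (hk : 1 ≤ k) :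
    1 / (qNum t ((k : ℝ) / 2)) ^ 2
      ≤ (δ ^ ((1 : ℝ) / 2) + δ ^ (-(1 : ℝ) / 2)) ^ 2 / (k : ℝ) ^ 2 := by
  obtain ⟨hQ, hle⟩ := key δ hδ0 hδ1 t htδ ht1 k hk
  have hk0 : (0 : ℝ) < k := by exact_mod_cast hk
  rw [div_le_div_iff₀ (by positivity) (by positivity)]
  nlinarith [mul_le_mul hle hle hk0.le (hk0.le.trans hle)]

/-- For `δ ∈ (0,1)`, `M ∈ ℕ` and `t ∈ [δ,1]`:
`2·Σ_{k=M+1}^∞ 1/([k/2]_t)² + (2/(M+1)²)·Σ_{k=1}^{M} k²/([k/2]_t)² ≤ ε(δ,M)²`. -/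
theorem statement12 (δ : ℝ) (hδ0 : 0 < δ) (hδ1 : δ < 1) (M : ℕ) (t : ℝ)
    (htδ : δ ≤ t) (ht1 : t ≤ 1) :
    2 * (∑' k : ℕ, 1 / (qNum t (((k : ℝ) + (M : ℝ) + 1) / 2)) ^ 2) +
      (2 / ((M : ℝ) + 1) ^ 2) *
        (∑ k ∈ Finset.Icc 1 M, (k : ℝ) ^ 2 / (qNum t ((k : ℝ) / 2)) ^ 2) ≤
      (epsDM δ M) ^ 2 := by
  set A := δ ^ ((1 : ℝ) / 2) + δ ^ (-(1 : ℝ) / 2) with hA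
  have hA0 : 0 < A := by
    have := Real.rpow_pos_of_pos hδ0 ((1 : ℝ) / 2)
    have := Real.rpow_pos_of_pos hδ0 (-(1 : ℝ) / 2)
    positivity
  set S := ∑' k : ℕ, 1 / ((k : ℝ) + (M : ℝ) + 1) ^ 2 with hS
  -- summability of the comparison series
  have hg : Summable (fun k : ℕ => 1 / ((k : ℝ) + (M : ℝ) + 1) ^ 2) := by
    have h0 : Summable (fun n : ℕ => 1 / (n : ℝ) ^ 2) :=
      Real.summable_one_div_nat_pow.mpr one_lt_two
    have h1 := (summable_nat_add_iff (M + 1)).mpr h0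
    exact h1.congr (fun n => by push_cast; ring_nf)
  have hterm : ∀ k : ℕ, 1 / (qNum t (((k : ℝ) + (M : ℝ) + 1) / 2)) ^ 2
      ≤ A ^ 2 * (1 / ((k : ℝ) + (M : ℝ) + 1) ^ 2) := by
    intro k
    have hc : ((k : ℝ) + (M : ℝ) + 1) = ((k + M + 1 : ℕ) : ℝ) := by push_cast; ring
    rw [hc]
    have h2 := key2 δ hδ0 hδ1 t htδ ht1 (k + M + 1) (by omega)
    exact h2.trans_eq (by rw [mul_one_div])
  have hgA : Summable (fun k : ℕ => A ^ 2 * (1 / ((k : ℝ) + (M : ℝ) + 1) ^ 2)) :=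
    hg.mul_left _
  have hf : Summable (fun k : ℕ => 1 / (qNum t (((k : ℝ) + (M : ℝ) + 1) / 2)) ^ 2) :=
    Summable.of_nonneg_of_le (fun k => by positivity) hterm hgA
  have hT : (∑' k : ℕ, 1 / (qNum t (((k : ℝ) + (M : ℝ) + 1) / 2)) ^ 2)
      ≤ A ^ 2 * S := by
    calc (∑' k : ℕ, 1 / (qNum t (((k : ℝ) + (M : ℝ) + 1) / 2)) ^ 2)
        ≤ ∑' k : ℕ, A ^ 2 * (1 / ((k : ℝ) + (M : ℝ) + 1) ^ 2) :=
          Summable.tsum_le_tsum hterm hf hgA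
      _ = A ^ 2 * S := tsum_mul_left
  have hF : (∑ k ∈ Finset.Icc 1 M, (k : ℝ) ^ 2 / (qNum t ((k : ℝ) / 2)) ^ 2)
      ≤ (M : ℝ) * A ^ 2 := by
    calc (∑ k ∈ Finset.Icc 1 M, (k : ℝ) ^ 2 / (qNum t ((k : ℝ) / 2)) ^ 2)
        ≤ ∑ k ∈ Finset.Icc 1 M, A ^ 2 := by
          apply Finset.sum_le_sum
          intro k hkmem
          have hk1 : 1 ≤ k := (Finset.mem_Icc.1 hkmem).1
          have hk0 : (0 : ℝ) < k := by exact_mod_cast hk1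
          have h2 := key2 δ hδ0 hδ1 t htδ ht1 k hk1
          calc (k : ℝ) ^ 2 / (qNum t ((k : ℝ) / 2)) ^ 2
              = (k : ℝ) ^ 2 * (1 / (qNum t ((k : ℝ) / 2)) ^ 2) := by ring
            _ ≤ (k : ℝ) ^ 2 * (A ^ 2 / (k : ℝ) ^ 2) :=
                mul_le_mul_of_nonneg_left h2 (by positivity)
            _ = A ^ 2 := by field_simp
      _ = (M : ℝ) * A ^ 2 := by
          rw [Finset.sum_const, Nat.card_Icc]
          simp [nsmul_eq_mul]
  have hS0 : 0 ≤ S := tsum_nonneg (fun k => by positivity)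
  have hB0 : 0 ≤ (M : ℝ) / ((M : ℝ) + 1) ^ 2 + S :=
    add_nonneg (by positivity) hS0
  have hRHS : epsDM δ M ^ 2 = 2 * A ^ 2 * ((M : ℝ) / ((M : ℝ) + 1) ^ 2 + S) := by
    rw [epsDM, mul_pow, mul_pow, Real.sq_sqrt (by norm_num : (0 : ℝ) ≤ 2),
      Real.sq_sqrt hB0, hA, hS]
  have hM2 : (0 : ℝ) < 2 / ((M : ℝ) + 1) ^ 2 := by positivity
  have h2 : (2 / ((M : ℝ) + 1) ^ 2) *
      (∑ k ∈ Finset.Icc 1 M, (k : ℝ) ^ 2 / (qNum t ((k : ℝ) / 2)) ^ 2)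
      ≤ (2 / ((M : ℝ) + 1) ^ 2) * ((M : ℝ) * A ^ 2) :=
    mul_le_mul_of_nonneg_left hF hM2.le
  have heq : 2 * (A ^ 2 * S) + (2 / ((M : ℝ) + 1) ^ 2) * ((M : ℝ) * A ^ 2)
      = 2 * A ^ 2 * ((M : ℝ) / ((M : ℝ) + 1) ^ 2 + S) := by ring
  rw [hRHS]
  linarith [hT, h2]
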